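/- arXiv:2406.01470 — 3 statements merged into one kernel-verified Lean document; each statement's English description precedes it below -/
import Mathlib

section
/- Let Ω be a Hermitian matrix on ℂ^d (d ≥ 2), ψ a unit vector with Ωψ = λ₀ψ where λ₀ is the largest eigenvalue of Ω, and let λ₁ be the maximum of ⟨χ, Ωχ⟩ over unit vectors χ orthogonal to ψ (the second-largest eigenvalue). Then for every ε ∈ [0, 1], the supremum of Tr(Ωρ) over density matrices ρ satisfying ⟨ψ, ρψ⟩ ≤ 1 − ε equals λ₀ − (λ₀ − λ₁)ε. (Worst-case passing probability, Equations 3–4 / Appendix B.) -/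
/-!
Write `P = |ψ⟩⟨ψ|`. Splitting `v = ⟨ψ, v⟩ ψ + w` with `w ⊥ ψ`, the eigenvector equation and
hermiticity kill the cross terms, so `⟨v, Ω v⟩ ≤ λ₁ ‖v‖² + (λ₀ - λ₁) |⟨ψ, v⟩|²`, i.e.
`Ω ≤ λ₁ • 1 + (λ₀ - λ₁) • P` in the Loewner order. Pairing with a density matrix `ρ` gives
`Tr(Ωρ) ≤ λ₁ + (λ₀ - λ₁) ⟨ψ, ρψ⟩ ≤ λ₀ - (λ₀ - λ₁) ε`, and the mixture
`(1 - ε) P + ε |χ⟩⟨χ|`, with `χ` a maximiser defining `λ₁`, attains the bound.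
-/

open Matrix
open scoped ComplexOrder MatrixOrder

theorem Matrix.trace_mul_vecMulVec {n R : Type*} [Fintype n] [CommSemiring R]
    (A : Matrix n n R) (v w : n → R) : (A * vecMulVec v w).trace = w ⬝ᵥ (A *ᵥ v) := by
  rw [mul_vecMulVec, trace_vecMulVec, dotProduct_comm]

section
variable {𝕜 n : Type*} [RCLike 𝕜] [Fintype n]

theorem Matrix.PosSemidef.trace_mul_nonneg {A B : Matrix n n 𝕜} (hA : A.PosSemidef)
    (hB : B.PosSemidef) : 0 ≤ (A * B).trace := by
  classical
  have hS : (CFC.sqrt B)ᴴ = CFC.sqrt B := (CFC.sqrt_nonneg B).posSemidef.isHermitian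
  have key : (A * B).trace = (CFC.sqrt B * A * (CFC.sqrt B)ᴴ).trace := by
    rw [hS, trace_mul_cycle, CFC.sqrt_mul_sqrt_self B hB.nonneg, trace_mul_comm]
  exact key ▸ (hA.mul_mul_conjTranspose_same _).trace_nonneg

theorem Matrix.trace_mul_le_trace_mul_of_le {A B ρ : Matrix n n 𝕜} (hAB : A ≤ B)
    (hρ : ρ.PosSemidef) : (A * ρ).trace ≤ (B * ρ).trace := by
  have h := (Matrix.le_iff.mp hAB).trace_mul_nonneg hρ
  rwa [sub_mul, trace_sub, sub_nonneg] at h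

end

section
variable {n : Type*} [Fintype n]


theorem Matrix.star_dotProduct_mulVec_ofReal_smul (A : Matrix n n ℂ) (r : ℝ) (w : n → ℂ) :
    star ((r : ℂ) • w) ⬝ᵥ (A *ᵥ ((r : ℂ) • w)) = ((r ^ 2 : ℝ) : ℂ) * (star w ⬝ᵥ (A *ᵥ w)) := by
  simp only [star_smul, mulVec_smul, dotProduct_smul, smul_dotProduct, Complex.star_def,
    Complex.conj_ofReal, smul_eq_mul]
  push_cast; ring

theorem Matrix.IsHermitian.star_dotProduct_mulVec_smul_add {A : Matrix n n ℂ} (hA : A.IsHermitian)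
    {ψ w : n → ℂ} {μ : ℝ} (hψ : A *ᵥ ψ = (μ : ℂ) • ψ) (hw : star ψ ⬝ᵥ w = 0) (a : ℂ) :
    star (a • ψ + w) ⬝ᵥ (A *ᵥ (a • ψ + w)) =
      ((Complex.normSq a * μ : ℝ) : ℂ) * (star ψ ⬝ᵥ ψ) + star w ⬝ᵥ (A *ᵥ w) := by
  have hw' : star w ⬝ᵥ ψ = 0 := by rw [star_dotProduct, hw, star_zero]
  have hAw : star ψ ⬝ᵥ (A *ᵥ w) = 0 := by
    rw [dotProduct_mulVec, ← hA.eq, ← star_mulVec, hψ, star_smul, smul_dotProduct, hw, smul_zero]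
  rw [star_add, star_smul, mulVec_add, mulVec_smul, hψ]
  simp only [add_dotProduct, dotProduct_add, smul_dotProduct, dotProduct_smul, hAw, hw',
    smul_eq_mul, mul_zero, add_zero, Complex.star_def]
  push_cast
  rw [← Complex.mul_conj]
  ring


theorem Matrix.re_star_dotProduct_mulVec_le_of_orthogonal {A : Matrix n n ℂ} {ψ : n → ℂ} {c : ℝ}
    (h : ∀ u, star u ⬝ᵥ u = 1 → star ψ ⬝ᵥ u = 0 → (star u ⬝ᵥ (A *ᵥ u)).re ≤ c)
    {w : n → ℂ} (hw : star ψ ⬝ᵥ w = 0) :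
    (star w ⬝ᵥ (A *ᵥ w)).re ≤ c * (star w ⬝ᵥ w).re := by
  classical
  obtain rfl | hw0 := eq_or_ne w 0
  · simp
  set s := (star w ⬝ᵥ w).re
  have hs : star w ⬝ᵥ w = s :=
    Complex.eq_re_of_ofReal_le (by exact_mod_cast dotProduct_star_self_nonneg w)
  have hs0 : 0 < s := by
    have := dotProduct_star_self_pos_iff.mpr hw0
    rw [hs] at this
    exact_mod_cast this
  set r := (√s)⁻¹
  have hr : r ^ 2 = s⁻¹ := by rw [inv_pow, Real.sq_sqrt hs0.le]
  have hunit : star ((r : ℂ) • w) ⬝ᵥ ((r : ℂ) • w) = 1 := by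
    have := star_dotProduct_mulVec_ofReal_smul 1 r w
    rw [one_mulVec, one_mulVec, hs, hr] at this
    rw [this]; push_cast; field_simp
  have hu := h _ hunit (by rw [dotProduct_smul, hw, smul_zero])
  rw [star_dotProduct_mulVec_ofReal_smul, Complex.re_ofReal_mul, hr, inv_mul_le_iff₀ hs0] at hu
  linarith

theorem Matrix.star_dotProduct_vecMulVec_mulVec (ψ x : n → ℂ) :
    star x ⬝ᵥ (vecMulVec ψ (star ψ) *ᵥ x) = Complex.normSq (star ψ ⬝ᵥ x) := by
  rw [vecMulVec_mulVec, op_smul_eq_smul, dotProduct_smul, smul_eq_mul, star_dotProduct x ψ,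
    Complex.star_def, ← Complex.mul_conj, mul_comm]

theorem Matrix.IsHermitian.re_star_dotProduct_mulVec_le {A : Matrix n n ℂ} (hA : A.IsHermitian)
    {ψ : n → ℂ} (hψ : star ψ ⬝ᵥ ψ = 1) {l₀ l₁ : ℝ} (hEig : A *ᵥ ψ = (l₀ : ℂ) • ψ)
    (horth : ∀ w, star ψ ⬝ᵥ w = 0 → (star w ⬝ᵥ (A *ᵥ w)).re ≤ l₁ * (star w ⬝ᵥ w).re)
    (v : n → ℂ) :
    (star v ⬝ᵥ (A *ᵥ v)).re ≤
      l₁ * (star v ⬝ᵥ v).re + (l₀ - l₁) * Complex.normSq (star ψ ⬝ᵥ v) := by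
  classical
  set a := star ψ ⬝ᵥ v
  set w := v - a • ψ
  have hw : star ψ ⬝ᵥ w = 0 := by
    rw [dotProduct_sub, dotProduct_smul, hψ, smul_eq_mul, mul_one, sub_self]
  have hv : v = a • ψ + w := (add_sub_cancel _ _).symm
  have hAv := hA.star_dotProduct_mulVec_smul_add hEig hw a
  have hv2 := isHermitian_one.star_dotProduct_mulVec_smul_add (μ := 1) (by simp) hw a
  simp only [one_mulVec, hψ, mul_one, ← hv] at hAv hv2
  rw [hAv, hv2]
  have := horth w hw
  simp only [Complex.add_re, Complex.ofReal_re]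
  linarith


theorem Matrix.IsHermitian.le_smul_one_add_smul_vecMulVec [DecidableEq n] {A : Matrix n n ℂ}
    (hA : A.IsHermitian) {ψ : n → ℂ} (hψ : star ψ ⬝ᵥ ψ = 1) {l₀ l₁ : ℝ}
    (hEig : A *ᵥ ψ = (l₀ : ℂ) • ψ)
    (h : ∀ u, star u ⬝ᵥ u = 1 → star ψ ⬝ᵥ u = 0 → (star u ⬝ᵥ (A *ᵥ u)).re ≤ l₁) :
    A ≤ l₁ • (1 : Matrix n n ℂ) + (l₀ - l₁) • vecMulVec ψ (star ψ) := by
  have hB : (l₁ • (1 : Matrix n n ℂ) + (l₀ - l₁) • vecMulVec ψ (star ψ) - A).IsHermitian :=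
    ((isHermitian_one.smul (.all l₁)).add
      ((posSemidef_vecMulVec_self_star ψ).isHermitian.smul (.all _))).sub hA
  refine Matrix.le_iff.mpr <|
    .of_dotProduct_mulVec_nonneg hB fun x => Complex.nonneg_iff.mpr ⟨?_, ?_⟩
  · have := hA.re_star_dotProduct_mulVec_le hψ hEig
      (fun _ => re_star_dotProduct_mulVec_le_of_orthogonal h) x
    simp only [sub_mulVec, add_mulVec, smul_mulVec, one_mulVec, dotProduct_sub, dotProduct_add,
      dotProduct_smul, star_dotProduct_vecMulVec_mulVec, Complex.sub_re, Complex.add_re,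
      Complex.smul_re, Complex.ofReal_re, smul_eq_mul]
    linarith
  · exact (hB.im_star_dotProduct_mulVec_self x).symm

theorem Matrix.trace_mul_smul_vecMulVec_add_smul_vecMulVec (A : Matrix n n ℂ) (s t : ℝ)
    (ψ χ : n → ℂ) :
    (A * (s • vecMulVec ψ (star ψ) + t • vecMulVec χ (star χ))).trace =
      s • (star ψ ⬝ᵥ (A *ᵥ ψ)) + t • (star χ ⬝ᵥ (A *ᵥ χ)) := by
  rw [mul_add, mul_smul_comm, mul_smul_comm, trace_add, trace_smul, trace_smul,
    trace_mul_vecMulVec, trace_mul_vecMulVec]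

theorem Matrix.re_trace_mul_le_of_le_smul_one_add_smul_vecMulVec [DecidableEq n]
    {A ρ : Matrix n n ℂ} {ψ : n → ℂ} {a b : ℝ}
    (hA : A ≤ a • (1 : Matrix n n ℂ) + b • vecMulVec ψ (star ψ)) (hρ : ρ.PosSemidef)
    (hρtr : ρ.trace = 1) :
    (A * ρ).trace.re ≤ a + b * (star ψ ⬝ᵥ (ρ *ᵥ ψ)).re := by
  have h := (Complex.le_def.mp (trace_mul_le_trace_mul_of_le hA hρ)).1
  rwa [add_mul, trace_add, smul_mul_assoc, smul_mul_assoc, one_mul, trace_smul, trace_smul, hρtr,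
    trace_mul_comm (vecMulVec ψ _), trace_mul_vecMulVec, Complex.add_re, Complex.smul_re,
    Complex.smul_re, Complex.one_re, smul_eq_mul, smul_eq_mul, mul_one] at h

end

theorem stmt_3_general {d : ℕ} (Ω : Matrix (Fin d) (Fin d) ℂ)
    (hΩ : Ω.IsHermitian) (ψ : Fin d → ℂ) (hψ : star ψ ⬝ᵥ ψ = 1)
    (l₀ l₁ : ℝ) (hEig : Ω *ᵥ ψ = (l₀ : ℂ) • ψ)
    (hMax : ∀ v : Fin d → ℂ, star v ⬝ᵥ v = 1 → (star v ⬝ᵥ (Ω *ᵥ v)).re ≤ l₀)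
    (hl₁ : IsGreatest {x : ℝ | ∃ χ : Fin d → ℂ, star χ ⬝ᵥ χ = 1 ∧
      star ψ ⬝ᵥ χ = 0 ∧ x = (star χ ⬝ᵥ (Ω *ᵥ χ)).re} l₁)
    (ε : ℝ) (hε : ε ∈ Set.Icc (0 : ℝ) 1) :
    IsLUB {x : ℝ | ∃ ρ : Matrix (Fin d) (Fin d) ℂ, ρ.PosSemidef ∧ ρ.trace = 1 ∧
        (star ψ ⬝ᵥ (ρ *ᵥ ψ)).re ≤ 1 - ε ∧ x = (Ω * ρ).trace.re}
      (l₀ - (l₀ - l₁) * ε) := by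
  obtain ⟨hε0, hε1⟩ := hε
  obtain ⟨χ, hχ, hψχ, hl₁χ⟩ := hl₁.1
  have hl₁l₀ : l₁ ≤ l₀ := hl₁χ ▸ hMax χ hχ
  have hΩle := hΩ.le_smul_one_add_smul_vecMulVec hψ hEig fun u hu hψu => hl₁.2 ⟨u, hu, hψu, rfl⟩
  refine IsGreatest.isLUB ⟨⟨(1 - ε) • vecMulVec ψ (star ψ) + ε • vecMulVec χ (star χ),
    ?_, ?_, ?_, ?_⟩, ?_⟩
  · exact ((posSemidef_vecMulVec_self_star ψ).smul (by linarith)).add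
      ((posSemidef_vecMulVec_self_star χ).smul hε0)
  · simpa [hψ, hχ] using trace_mul_smul_vecMulVec_add_smul_vecMulVec 1 (1 - ε) ε ψ χ
  · rw [← trace_mul_vecMulVec, trace_mul_comm, trace_mul_smul_vecMulVec_add_smul_vecMulVec]
    simp [star_dotProduct_vecMulVec_mulVec, hψ, hψχ]
  · rw [trace_mul_smul_vecMulVec_add_smul_vecMulVec, hEig, dotProduct_smul, hψ, smul_eq_mul,
      mul_one, Complex.add_re, Complex.smul_re, Complex.smul_re, Complex.ofReal_re, ← hl₁χ]
    ring
  · rintro _ ⟨ρ, hρ, hρtr, hρψ, rfl⟩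
    have := mul_le_mul_of_nonneg_left hρψ (sub_nonneg.mpr hl₁l₀)
    linarith [re_trace_mul_le_of_le_smul_one_add_smul_vecMulVec hΩle hρ hρtr]

/-- Worst-case passing probability (Equations 3–4 / Appendix B): if the target
state `ψ` is an eigenvector of the Hermitian strategy `Ω` with largest
eigenvalue `l₀`, and `l₁` is the maximum expectation over unit vectors
orthogonal to `ψ` (the second-largest eigenvalue), then for every `ε ∈ [0,1]`
the supremum of `Tr(Ωρ)` over density matrices with fidelity
`⟨ψ, ρψ⟩ ≤ 1 − ε` equals `l₀ − (l₀ − l₁)ε`. -/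
theorem stmt_3 {d : ℕ} (hd : 2 ≤ d) (Ω : Matrix (Fin d) (Fin d) ℂ)
    (hΩ : Ω.IsHermitian) (ψ : Fin d → ℂ) (hψ : star ψ ⬝ᵥ ψ = 1)
    (l₀ l₁ : ℝ) (hEig : Ω *ᵥ ψ = (l₀ : ℂ) • ψ)
    (hMax : ∀ v : Fin d → ℂ, star v ⬝ᵥ v = 1 → (star v ⬝ᵥ (Ω *ᵥ v)).re ≤ l₀)
    (hl₁ : IsGreatest {x : ℝ | ∃ χ : Fin d → ℂ, star χ ⬝ᵥ χ = 1 ∧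
      star ψ ⬝ᵥ χ = 0 ∧ x = (star χ ⬝ᵥ (Ω *ᵥ χ)).re} l₁)
    (ε : ℝ) (hε : ε ∈ Set.Icc (0 : ℝ) 1) :
    IsLUB {x : ℝ | ∃ ρ : Matrix (Fin d) (Fin d) ℂ, ρ.PosSemidef ∧ ρ.trace = 1 ∧
        (star ψ ⬝ᵥ (ρ *ᵥ ψ)).re ≤ 1 - ε ∧ x = (Ω * ρ).trace.re}
      (l₀ - (l₀ - l₁) * ε) :=
  stmt_3_general Ω hΩ ψ hψ l₀ l₁ hEig hMax hl₁ ε hε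
end

section
/- Fix λ₀ ∈ (0, 1) and define, for t > 0 sufficiently small (0 < t < min(λ₀, 1−λ₀)), f(t) = ½[exp(−D(λ₀ ‖ λ₀ − t/2)) + exp(−D(λ₀ − t ‖ λ₀ − t/2))]. Then lim_{t→0⁺} (f(t) − 1)/t² = −1/(8·λ₀·(1−λ₀)). (Second-order Taylor behaviour of the Chernoff bound on the symmetric error rate, Equation 43 in Appendix C; it yields the scaling N ∼ 8λ₀(1−λ₀)(ν ε)^{−2} ln δ^{−1}.) -/
/-!
Put `φ(x) = (log (1 + x) - x) / x²`, so that `log (1 + x) = x + x² φ(x)` and `φ(x) → -1/2`.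
Expanding both logarithms of `D(a‖b)` around `a` gives the exact identity
`D(a‖b) = -(a - b)² (φ((b - a)/a)/a + φ((a - b)/(1 - a))/(1 - a))`, hence
`D(a‖b) ~ (a - b)² / (2p(1 - p))` as `a, b → p`. Both divergences in `f(t)` have `|a - b| = t/2`,
so each is `~ t² / (8λ₀(1 - λ₀))`, and `exp(-D) - 1 ~ -D`.
-/

open Filter Topology Real

noncomputable def bernoulliKL (a b : ℝ) : ℝ :=
  a * log (a / b) + (1 - a) * log ((1 - a) / (1 - b))

-- The junk value `logRemainder 0 = 0` is harmless: `log_one_add_eq` holds at `x = 0` too.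
noncomputable def logRemainder (x : ℝ) : ℝ := (log (1 + x) - x) / x ^ 2

lemma log_one_add_eq (x : ℝ) : log (1 + x) = x + x ^ 2 * logRemainder x := by
  rcases eq_or_ne x 0 with rfl | hx
  · simp
  · rw [logRemainder, mul_div_cancel₀ _ (pow_ne_zero 2 hx)]
    ring

lemma abs_logRemainder_add_half_le {x : ℝ} (hx₀ : x ≠ 0) (hx : |x| < 1) :
    |logRemainder x + 1 / 2| ≤ |x| / (1 - |x|) := by
  have hx2 : 0 < x ^ 2 := by positivity
  have key := abs_log_sub_add_sum_range_le (show |-x| < 1 by rwa [abs_neg]) 2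
  simp only [Finset.sum_range_succ, Finset.sum_range_zero, sub_neg_eq_add, abs_neg] at key
  have h : logRemainder x + 1 / 2 = (-x + x ^ 2 / 2 + log (1 + x)) / x ^ 2 := by
    rw [logRemainder]; field_simp; ring
  rw [h, abs_div, abs_of_pos hx2, div_le_iff₀ hx2]
  norm_num at key
  refine key.trans_eq ?_
  rw [← sq_abs x]; ring

lemma tendsto_logRemainder : Tendsto logRemainder (𝓝[≠] 0) (𝓝 (-1 / 2)) := by
  rw [← tendsto_sub_nhds_zero_iff]
  have hbound : Tendsto (fun x : ℝ => |x| / (1 - |x|)) (𝓝[≠] 0) (𝓝 0) := by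
    have hc : ContinuousAt (fun x : ℝ => |x| / (1 - |x|)) 0 := by
      fun_prop (disch := simp)
    simpa using hc.tendsto.mono_left nhdsWithin_le_nhds
  refine squeeze_zero_norm' ?_ hbound
  have hsmall : ∀ᶠ x : ℝ in 𝓝 0, |x| < 1 := by
    simpa using eventually_abs_sub_lt (0 : ℝ) one_pos
  filter_upwards [hsmall.filter_mono nhdsWithin_le_nhds, self_mem_nhdsWithin] with x hx hx₀
  rw [Real.norm_eq_abs, sub_eq_add_neg, neg_div, neg_neg]
  exact abs_logRemainder_add_half_le hx₀ hx

lemma mul_log_div_eq {a : ℝ} (b : ℝ) (ha : a ≠ 0) :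
    a * log (a / b) = (a - b) - (a - b) ^ 2 / a * logRemainder ((b - a) / a) := by
  have h : a / b = (1 + (b - a) / a)⁻¹ := by
    rw [← inv_div]; congr 1; field_simp; ring
  rw [h, log_inv, log_one_add_eq]
  field_simp
  ring

lemma bernoulliKL_eq {a : ℝ} (b : ℝ) (ha₀ : a ≠ 0) (ha₁ : a ≠ 1) :
    bernoulliKL a b = -(a - b) ^ 2 *
      (logRemainder ((b - a) / a) / a + logRemainder ((a - b) / (1 - a)) / (1 - a)) := by
  rw [bernoulliKL, mul_log_div_eq b ha₀, mul_log_div_eq (1 - b) (sub_ne_zero.2 ha₁.symm),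
    show 1 - b - (1 - a) = a - b by ring]
  ring

lemma tendsto_bernoulliKL_div_sq {α : Type*} {l : Filter α} {a b : α → ℝ} {p : ℝ}
    (hp₀ : p ≠ 0) (hp₁ : p ≠ 1) (ha : Tendsto a l (𝓝 p)) (hb : Tendsto b l (𝓝 p))
    (hab : ∀ᶠ x in l, a x ≠ b x) :
    Tendsto (fun x => bernoulliKL (a x) (b x) / (a x - b x) ^ 2) l
      (𝓝 (1 / (2 * p * (1 - p)))) := by
  have hp₁' : 1 - p ≠ 0 := sub_ne_zero.2 hp₁.symm
  have ha₀ := ha.eventually_ne hp₀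
  have ha₁ := ha.eventually_ne hp₁
  have hx : Tendsto (fun x => (b x - a x) / a x) l (𝓝[≠] 0) := by
    refine tendsto_nhdsWithin_iff.2 ⟨?_, ?_⟩
    · convert (hb.sub ha).div ha hp₀ using 2 <;> simp
    · filter_upwards [hab, ha₀] with x h h₀
      exact div_ne_zero (sub_ne_zero.2 h.symm) h₀
  have hy : Tendsto (fun x => (a x - b x) / (1 - a x)) l (𝓝[≠] 0) := by
    refine tendsto_nhdsWithin_iff.2 ⟨?_, ?_⟩
    · convert (ha.sub hb).div (tendsto_const_nhds.sub ha) hp₁' using 2 <;> simp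
    · filter_upwards [hab, ha₁] with x h h₁
      exact div_ne_zero (sub_ne_zero.2 h) (sub_ne_zero.2 h₁.symm)
  have hlim := ((tendsto_logRemainder.comp hx).div ha hp₀).add
    ((tendsto_logRemainder.comp hy).div (tendsto_const_nhds.sub ha) hp₁')
  have hval : -(-1 / 2 / p + -1 / 2 / (1 - p)) = 1 / (2 * p * (1 - p)) := by
    field_simp; ring
  refine (hval ▸ hlim.neg).congr' ?_
  filter_upwards [hab, ha₀, ha₁] with x h h₀ h₁
  rw [bernoulliKL_eq _ h₀ h₁, neg_mul, neg_div,
    mul_div_cancel_left₀ _ (pow_ne_zero 2 (sub_ne_zero.2 h))]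
  rfl

lemma tendsto_exp_sub_one_div {α : Type*} {l : Filter α} {g s : α → ℝ} {c : ℝ}
    (hg : Tendsto (fun x => g x / s x) l (𝓝 c)) (hs : Tendsto s l (𝓝 0))
    (hs₀ : ∀ᶠ x in l, s x ≠ 0) :
    Tendsto (fun x => (exp (g x) - 1) / s x) l (𝓝 c) := by
  have hg₀ : Tendsto g l (𝓝 0) := by
    refine (mul_zero c ▸ hg.mul hs).congr' ?_
    filter_upwards [hs₀] with x hx
    exact div_mul_cancel₀ _ hx
  have hslope : Tendsto (fun x => dslope exp 0 (g x)) l (𝓝 1) := by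
    have hcont := (continuousAt_dslope_same.2 (differentiableAt_exp (x := 0))).tendsto
    rw [dslope_same, Real.deriv_exp, exp_zero] at hcont
    exact hcont.comp hg₀
  refine (mul_one c ▸ hg.mul hslope).congr fun x => ?_
  have h := sub_smul_dslope exp 0 (g x)
  rw [sub_zero, smul_eq_mul, exp_zero] at h
  rw [← h, mul_div_right_comm]

lemma tendsto_exp_neg_bernoulliKL_sub_one_div_sq {α : Type*} {l : Filter α} {a b : α → ℝ}
    {p : ℝ} (hp₀ : p ≠ 0) (hp₁ : p ≠ 1) (ha : Tendsto a l (𝓝 p)) (hb : Tendsto b l (𝓝 p))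
    (hab : ∀ᶠ x in l, a x ≠ b x) :
    Tendsto (fun x => (exp (-bernoulliKL (a x) (b x)) - 1) / (a x - b x) ^ 2) l
      (𝓝 (-1 / (2 * p * (1 - p)))) := by
  refine tendsto_exp_sub_one_div ?_ ?_ ?_
  · simpa only [neg_div] using (tendsto_bernoulliKL_div_sq hp₀ hp₁ ha hb hab).neg
  · simpa using (ha.sub hb).pow 2
  · filter_upwards [hab] with x h
    exact pow_ne_zero 2 (sub_ne_zero.2 h)

lemma tendsto_exp_neg_bernoulliKL_sub_one_div_sq_of_sq_sub {p : ℝ} (hp₀ : p ≠ 0) (hp₁ : p ≠ 1)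
    {a b : ℝ → ℝ} (ha : Tendsto a (𝓝[>] 0) (𝓝 p)) (hb : Tendsto b (𝓝[>] 0) (𝓝 p))
    (hab : ∀ t, (a t - b t) ^ 2 = t ^ 2 / 4) :
    Tendsto (fun t => (exp (-bernoulliKL (a t) (b t)) - 1) / t ^ 2) (𝓝[>] 0)
      (𝓝 (-1 / (8 * p * (1 - p)))) := by
  have hne : ∀ᶠ t in 𝓝[>] (0 : ℝ), a t ≠ b t := by
    filter_upwards [self_mem_nhdsWithin] with t (ht : 0 < t)
    rw [← sub_ne_zero, ← pow_ne_zero_iff two_ne_zero, hab]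
    positivity
  have hval : -1 / (2 * p * (1 - p)) / 4 = -1 / (8 * p * (1 - p)) := by
    rw [div_div]; congr 1; ring
  have hlim := (tendsto_exp_neg_bernoulliKL_sub_one_div_sq hp₀ hp₁ ha hb hne).div_const 4
  refine (hval ▸ hlim).congr' ?_
  filter_upwards [self_mem_nhdsWithin] with t (ht : 0 < t)
  rw [hab]
  field_simp

/-- Second-order Taylor behaviour of the Chernoff bound on the symmetric
error rate (Equation 43 in Appendix C): with
`D(a‖b) = a·ln(a/b) + (1−a)·ln((1−a)/(1−b))` and
`f(t) = ½[exp(−D(l₀ ‖ l₀ − t/2)) + exp(−D(l₀ − t ‖ l₀ − t/2))]`,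
one has `lim_{t→0⁺} (f(t) − 1)/t² = −1/(8·l₀·(1−l₀))`. -/
theorem stmt_9 (l₀ : ℝ) (hl : l₀ ∈ Set.Ioo (0 : ℝ) 1)
    (D : ℝ → ℝ → ℝ)
    (hD : ∀ a b : ℝ, D a b =
      a * Real.log (a / b) + (1 - a) * Real.log ((1 - a) / (1 - b)))
    (f : ℝ → ℝ)
    (hf : ∀ t : ℝ, f t =
      (Real.exp (-(D l₀ (l₀ - t / 2))) + Real.exp (-(D (l₀ - t) (l₀ - t / 2)))) / 2) :
    Filter.Tendsto (fun t : ℝ => (f t - 1) / t ^ 2)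
      (nhdsWithin 0 (Set.Ioi 0))
      (nhds (-1 / (8 * l₀ * (1 - l₀)))) := by
  obtain rfl : D = bernoulliKL := funext₂ hD
  have hl₀ : l₀ ≠ 0 := hl.1.ne'
  have hl₁ : l₀ ≠ 1 := hl.2.ne
  have hcont (g : ℝ → ℝ) (hg : Continuous g) (hg₀ : g 0 = l₀) : Tendsto g (𝓝[>] 0) (𝓝 l₀) :=
    (hg.tendsto' 0 l₀ hg₀).mono_left nhdsWithin_le_nhds
  have hmid := hcont (fun t => l₀ - t / 2) (by fun_prop) (by simp)
  have hsum := ((tendsto_exp_neg_bernoulliKL_sub_one_div_sq_of_sq_sub hl₀ hl₁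
      tendsto_const_nhds hmid fun t => by ring).add
    (tendsto_exp_neg_bernoulliKL_sub_one_div_sq_of_sq_sub hl₀ hl₁
      (hcont (fun t => l₀ - t) (by fun_prop) (by simp)) hmid fun t => by ring)).div_const 2
  rw [add_self_div_two] at hsum
  refine hsum.congr fun t => ?_
  rw [hf]
  ring
end

section
/- Let n ≥ 2 and η : {1, …, n} → ℝ with 0 ≤ ηᵢ < 1/2 for all i. With P̃₀ = ⊗ᵢ[(1−ηᵢ)E₀ + ηᵢE₁] + ⊗ᵢ[ηᵢE₀ + (1−ηᵢ)E₁] on ℂ^{2^n} and GHZₙ = (e_{0…0} + e_{1…1})/√2, we have P̃₀·GHZₙ = [Πᵢ(1−ηᵢ) + Πᵢηᵢ]·GHZₙ, and for every x ∈ {0,1}^n other than 0…0 and 1…1, the eigenvalue μ_x of P̃₀ on e_x satisfies μ_x < Πᵢ(1−ηᵢ) + Πᵢηᵢ; hence Πᵢ(1−ηᵢ) + Πᵢηᵢ is the uniquely largest eigenvalue of P̃₀ among computational basis vectors outside span{e_{0…0}, e_{1…1}}. (The GHZ state attains the dominant eigenvalue of the noisy test P̃₀, Appendix E.) -/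
open Matrix

/-- The `n`-fold tensor (Kronecker) product of single-qubit matrices,
realized on the index type `Fin n → Fin 2`:
`(⊗ᵢ Aᵢ)(x, y) = Πᵢ Aᵢ(xᵢ, yᵢ)`. -/
def tensorM {n : ℕ} (A : Fin n → Matrix (Fin 2) (Fin 2) ℂ) :
    Matrix (Fin n → Fin 2) (Fin n → Fin 2) ℂ :=
  fun x y => ∏ i, A i (x i) (y i)

/-! Both tensor factors of `P̃₀` are diagonal, so `P̃₀` is diagonal in the computational basis, and
its two diagonal entries at `0…0` and `1…1` both equal `Πᵢ(1−ηᵢ) + Πᵢηᵢ`. For any other `x` the sets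
`S₀ = {i | xᵢ = 0}` and `S₁ = {i | xᵢ = 1}` are nonempty, so `pₖ = Π_{Sₖ}(1−ηᵢ)` strictly exceeds
`qₖ = Π_{Sₖ}ηᵢ`, and `μ_x = p₀q₁ + q₀p₁ < p₀p₁ + q₀q₁` is the strict rearrangement inequality
`(p₀ − q₀)(p₁ − q₁) > 0`. -/

open Finset

theorem Finset.prod_lt_prod_of_nonempty_of_nonneg {ι R : Type*} [CommSemiring R] [PartialOrder R]
    [IsStrictOrderedRing R] {s : Finset ι} {f g : ι → R} (hf : ∀ i ∈ s, 0 ≤ f i)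
    (hfg : ∀ i ∈ s, f i < g i) (hs : s.Nonempty) : ∏ i ∈ s, f i < ∏ i ∈ s, g i := by
  induction hs using Finset.Nonempty.cons_induction with
  | singleton a => simpa using hfg a (mem_singleton_self a)
  | cons a s _ _ ih =>
    simp only [prod_cons, mem_cons, forall_eq_or_imp] at hf hfg ⊢
    exact mul_lt_mul'' hfg.1 (ih hf.2 hfg.2) hf.1 (prod_nonneg hf.2)

theorem Finset.prod_filter_eq_zero_mul_prod_filter_eq_one {ι M : Type*} [Fintype ι] [CommMonoid M]
    (x : ι → Fin 2) (f : ι → M) :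
    (∏ i ∈ univ.filter (x · = 0), f i) * ∏ i ∈ univ.filter (x · = 1), f i = ∏ i, f i := by
  have : univ.filter (x · = 1) = univ.filter (¬ x · = 0) := filter_congr fun i _ => by omega
  rw [this, prod_filter_mul_prod_filter_not]

theorem Matrix.smul_single_add_smul_single_eq_diagonal {R : Type*} [Semiring R] (a b : R) :
    a • single (0 : Fin 2) (0 : Fin 2) (1 : R) + b • single 1 1 1 = diagonal ![a, b] := by
  ext i j
  fin_cases i <;> fin_cases j <;> simp

theorem tensorM_diagonal {n : ℕ} (d : Fin n → Fin 2 → ℂ) :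
    tensorM (fun i => diagonal (d i)) = diagonal fun x => ∏ i, d i (x i) := by
  ext x y
  simp only [tensorM, diagonal_apply, Fintype.prod_ite_zero, funext_iff]
  split_ifs with h
  · exact prod_congr rfl fun i _ => by rw [h i]
  · rfl

theorem Matrix.diagonal_mulVec_single_add_single {ι R : Type*} [Fintype ι] [DecidableEq ι]
    [CommSemiring R] {d : ι → R} {i j : ι} {c : R} (hi : d i = c) (hj : d j = c) :
    diagonal d *ᵥ (Pi.single i 1 + Pi.single j 1) = c • (Pi.single i 1 + Pi.single j 1) := by
  rw [mulVec_add, diagonal_mulVec_single, diagonal_mulVec_single, hi, hj, mul_one, smul_add,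
    ← Pi.single_smul', ← Pi.single_smul', smul_eq_mul, mul_one]

theorem noisy_eigenvalue_lt_of_ne_const {ι : Type*} [Fintype ι] (η : ι → ℝ)
    (hη : ∀ i, 0 ≤ η i ∧ η i < 1 / 2) (x : ι → Fin 2)
    (hx0 : x ≠ fun _ => 0) (hx1 : x ≠ fun _ => 1) :
    ((∏ i ∈ univ.filter (fun i => x i = 0), (1 - η i)) *
        ∏ i ∈ univ.filter (fun i => x i = 1), η i) +
      ((∏ i ∈ univ.filter (fun i => x i = 0), η i) *
        ∏ i ∈ univ.filter (fun i => x i = 1), (1 - η i))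
      < (∏ i, (1 - η i)) + ∏ i, η i := by
  have hlt : ∀ s : Finset ι, s.Nonempty → ∏ i ∈ s, η i < ∏ i ∈ s, (1 - η i) := fun s =>
    prod_lt_prod_of_nonempty_of_nonneg (fun i _ => (hη i).1) fun i _ => by linarith [hη i]
  obtain ⟨i₀, hi₀⟩ := Function.ne_iff.1 hx1
  obtain ⟨i₁, hi₁⟩ := Function.ne_iff.1 hx0
  rw [← prod_filter_eq_zero_mul_prod_filter_eq_one x,
    ← prod_filter_eq_zero_mul_prod_filter_eq_one x]
  exact mul_add_mul_lt_mul_add_mul' (hlt _ ⟨i₀, by simp; omega⟩) (hlt _ ⟨i₁, by simp; omega⟩)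

theorem stmt_16_general (n : ℕ) (η : Fin n → ℝ)
    (hη : ∀ i, 0 ≤ η i ∧ η i < 1 / 2)
    (E₀ E₁ : Matrix (Fin 2) (Fin 2) ℂ)
    (hE₀ : E₀ = Matrix.single 0 0 1)
    (hE₁ : E₁ = Matrix.single 1 1 1)
    (Pt : Matrix (Fin n → Fin 2) (Fin n → Fin 2) ℂ)
    (hPt : Pt = tensorM (fun i => ((1 - η i : ℝ) : ℂ) • E₀ + ((η i : ℝ) : ℂ) • E₁)
      + tensorM (fun i => ((η i : ℝ) : ℂ) • E₀ + ((1 - η i : ℝ) : ℂ) • E₁))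
    (GHZ : (Fin n → Fin 2) → ℂ)
    (hGHZ : GHZ = ((Real.sqrt 2 : ℂ))⁻¹ •
      ((Pi.single (fun _ => 0) 1 : (Fin n → Fin 2) → ℂ) +
       (Pi.single (fun _ => 1) 1 : (Fin n → Fin 2) → ℂ))) :
    Pt *ᵥ GHZ = ((((∏ i, (1 - η i)) + ∏ i, η i : ℝ)) : ℂ) • GHZ ∧
    ∀ x : Fin n → Fin 2, x ≠ (fun _ => 0) → x ≠ (fun _ => 1) →
      ((∏ i ∈ Finset.univ.filter (fun i => x i = 0), (1 - η i)) *
          ∏ i ∈ Finset.univ.filter (fun i => x i = 1), η i) +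
        ((∏ i ∈ Finset.univ.filter (fun i => x i = 0), η i) *
          ∏ i ∈ Finset.univ.filter (fun i => x i = 1), (1 - η i))
        < (∏ i, (1 - η i)) + ∏ i, η i := by
  subst hE₀ hE₁ hPt hGHZ
  refine ⟨?_, noisy_eigenvalue_lt_of_ne_const η hη⟩
  simp only [smul_single_add_smul_single_eq_diagonal, tensorM_diagonal, diagonal_add]
  rw [mulVec_smul, diagonal_mulVec_single_add_single, smul_comm] <;> simp [add_comm]

/-- The GHZ state attains the dominant eigenvalue of the noisy test `P̃₀`
(Appendix E): for `0 ≤ ηᵢ < 1/2`, `P̃₀·GHZₙ = [Πᵢ(1−ηᵢ) + Πᵢηᵢ]·GHZₙ`, and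
for every computational basis vector `e_x` with `x` not all-zeros nor
all-ones, the eigenvalue `μ_x` of `P̃₀` on `e_x` is strictly smaller than
`Πᵢ(1−ηᵢ) + Πᵢηᵢ`. -/
theorem stmt_16 (n : ℕ) (hn : 2 ≤ n) (η : Fin n → ℝ)
    (hη : ∀ i, 0 ≤ η i ∧ η i < 1 / 2)
    (E₀ E₁ : Matrix (Fin 2) (Fin 2) ℂ)
    (hE₀ : E₀ = Matrix.single 0 0 1)
    (hE₁ : E₁ = Matrix.single 1 1 1)
    (Pt : Matrix (Fin n → Fin 2) (Fin n → Fin 2) ℂ)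
    (hPt : Pt = tensorM (fun i => ((1 - η i : ℝ) : ℂ) • E₀ + ((η i : ℝ) : ℂ) • E₁)
      + tensorM (fun i => ((η i : ℝ) : ℂ) • E₀ + ((1 - η i : ℝ) : ℂ) • E₁))
    (GHZ : (Fin n → Fin 2) → ℂ)
    (hGHZ : GHZ = ((Real.sqrt 2 : ℂ))⁻¹ •
      ((Pi.single (fun _ => 0) 1 : (Fin n → Fin 2) → ℂ) +
       (Pi.single (fun _ => 1) 1 : (Fin n → Fin 2) → ℂ))) :
    Pt *ᵥ GHZ = ((((∏ i, (1 - η i)) + ∏ i, η i : ℝ)) : ℂ) • GHZ ∧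
    ∀ x : Fin n → Fin 2, x ≠ (fun _ => 0) → x ≠ (fun _ => 1) →
      ((∏ i ∈ Finset.univ.filter (fun i => x i = 0), (1 - η i)) *
          ∏ i ∈ Finset.univ.filter (fun i => x i = 1), η i) +
        ((∏ i ∈ Finset.univ.filter (fun i => x i = 0), η i) *
          ∏ i ∈ Finset.univ.filter (fun i => x i = 1), (1 - η i))
        < (∏ i, (1 - η i)) + ∏ i, η i :=
  stmt_16_general n η hη E₀ E₁ hE₀ hE₁ Pt hPt GHZ hGHZ
end
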